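/- There exists a full graph homomorphism from G into H if and only if the reduced form of G embeds as an induced subgraph into the reduced form of H. -/

import Mathlib

/-- A full homomorphism between simple graphs: adjacency is both preserved and
reflected. -/
def IsFullHom {V W : Type*} (G : SimpleGraph V) (H : SimpleGraph W) (f : V → W) : Prop :=
  ∀ u v, G.Adj u v ↔ H.Adj (f u) (f v)

/-- A graph is reduced if distinct vertices have distinct neighborhoods. -/
def Reduced {V : Type*} (G : SimpleGraph V) : Prop :=
  ∀ u v : V, G.neighborSet u = G.neighborSet v → u = v

/-- The reduced form of G: vertices are the neighborhoods of vertices of G, with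
N(u) adjacent to N(v) iff u and v are adjacent in G. -/
def ReducedForm {V : Type*} (G : SimpleGraph V) :
    SimpleGraph {s : Set V // ∃ v, s = G.neighborSet v} where
  Adj s t := ∃ u v, (s : Set V) = G.neighborSet u ∧ (t : Set V) = G.neighborSet v ∧ G.Adj u v
  symm := by
    refine ⟨?_⟩
    rintro s t ⟨u, v, hu, hv, h⟩
    exact ⟨v, u, hv, hu, h.symm⟩
  loopless := by
    refine ⟨?_⟩
    rintro s ⟨u, v, hu, hv, h⟩
    have h2 : v ∈ G.neighborSet u := h
    rw [hu.symm.trans hv] at h2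
    exact G.loopless.irrefl v h2

/-!
The map `v ↦ N(v)` is a surjective full homomorphism `G → Ĝ`, so any section of it is a full
homomorphism `Ĝ → G`. Full homomorphisms compose, so `f : G → H` induces the full homomorphism
`Ĝ → G → H → Ĥ`, and conversely `g : Ĝ → Ĥ` induces `G → Ĝ → Ĥ → H`. The induced map `Ĝ → Ĥ`
is injective because a full homomorphism reflects equality of neighbourhoods:
`x ∈ N(u) ↔ f x ∈ N(f u)`.
-/

open Function SimpleGraph

namespace IsFullHom

variable {U V W : Type*} {F : SimpleGraph U} {G : SimpleGraph V} {H : SimpleGraph W}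

theorem comp {g : V → W} {f : U → V} (hg : IsFullHom G H g) (hf : IsFullHom F G f) :
    IsFullHom F H (g ∘ f) :=
  fun u v => (hf u v).trans (hg (f u) (f v))

theorem neighborSet_eq_of_map_eq {f : V → W} (hf : IsFullHom G H f) {u v : V}
    (h : H.neighborSet (f u) = H.neighborSet (f v)) : G.neighborSet u = G.neighborSet v := by
  ext x
  rw [mem_neighborSet, mem_neighborSet, hf u x, hf v x]
  exact Set.ext_iff.1 h (f x)

end IsFullHom

section ReducedForm

variable {V : Type*} (G : SimpleGraph V)

def toReducedForm (v : V) : {s : Set V // ∃ v, s = G.neighborSet v} :=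
  ⟨G.neighborSet v, v, rfl⟩

theorem toReducedForm_eq_iff {u v : V} :
    toReducedForm G u = toReducedForm G v ↔ G.neighborSet u = G.neighborSet v :=
  Subtype.ext_iff

theorem toReducedForm_surjective : Surjective (toReducedForm G) := by
  rintro ⟨s, v, rfl⟩
  exact ⟨v, rfl⟩

theorem isFullHom_toReducedForm : IsFullHom G (ReducedForm G) (toReducedForm G) := by
  intro u v
  refine ⟨fun huv => ⟨u, v, rfl, rfl, huv⟩, ?_⟩
  rintro ⟨a, b, hua, hvb, hab⟩
  change G.neighborSet u = G.neighborSet a at hua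
  change G.neighborSet v = G.neighborSet b at hvb
  have hbu : b ∈ G.neighborSet u := hua ▸ hab
  have huv : u ∈ G.neighborSet v := hvb ▸ hbu.symm
  exact huv.symm

noncomputable def reducedFormRep : {s : Set V // ∃ v, s = G.neighborSet v} → V :=
  surjInv (toReducedForm_surjective G)

theorem toReducedForm_reducedFormRep (s : {s : Set V // ∃ v, s = G.neighborSet v}) :
    toReducedForm G (reducedFormRep G s) = s :=
  surjInv_eq _ s

theorem isFullHom_reducedFormRep : IsFullHom (ReducedForm G) G (reducedFormRep G) := by
  intro s t
  rw [isFullHom_toReducedForm G, toReducedForm_reducedFormRep, toReducedForm_reducedFormRep]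

end ReducedForm

/-- There is a full homomorphism from G into H iff the reduced form of G embeds
(as an induced subgraph, i.e., via an injective full homomorphism) into the reduced
form of H. -/
theorem fullHom_iff_reducedForm_embeds {V W : Type*} (G : SimpleGraph V) (H : SimpleGraph W) :
    (∃ f : V → W, IsFullHom G H f) ↔
    (∃ g : {s : Set V // ∃ v, s = G.neighborSet v} → {s : Set W // ∃ v, s = H.neighborSet v},
        Function.Injective g ∧ IsFullHom (ReducedForm G) (ReducedForm H) g) := by
  constructor
  · rintro ⟨f, hf⟩
    refine ⟨toReducedForm H ∘ f ∘ reducedFormRep G, fun s t hst => ?_,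
      (isFullHom_toReducedForm H).comp (hf.comp (isFullHom_reducedFormRep G))⟩
    rw [← toReducedForm_reducedFormRep G s, ← toReducedForm_reducedFormRep G t,
      toReducedForm_eq_iff]
    exact hf.neighborSet_eq_of_map_eq ((toReducedForm_eq_iff H).1 hst)
  · rintro ⟨g, -, hg⟩
    exact ⟨reducedFormRep H ∘ g ∘ toReducedForm G,
      (isFullHom_reducedFormRep H).comp (hg.comp (isFullHom_toReducedForm G))⟩
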